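/- Let N be a complete normal subgroup of an n-space group Γ, let V = Span(N), and let K be the kernel of the action of Γ on V. Then N ∩ K = {1}, every element of N commutes with every element of K, and NK is a normal subgroup of Γ isomorphic to the direct product N × K. -/

import Mathlib

/-- Euclidean n-space, as `Fin n → ℝ` with the dot product as inner product. -/
abbrev Eu (n : ℕ) : Type := Fin n → ℝ

/-- An isometry `a + A` of Euclidean n-space: `x ↦ a + A x` with `A` orthogonal. -/
@[ext] structure Iso (n : ℕ) where
  a : Eu n
  A : Matrix.orthogonalGroup (Fin n) ℝ

namespace Iso

variable {n : ℕ}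

/-- The matrix part of an isometry. -/
def mat (φ : Iso n) : Matrix (Fin n) (Fin n) ℝ := φ.A

instance : Mul (Iso n) := ⟨fun φ ψ => ⟨φ.a + φ.mat.mulVec ψ.a, φ.A * ψ.A⟩⟩
instance : One (Iso n) := ⟨⟨0, 1⟩⟩
instance : Inv (Iso n) :=
  ⟨fun φ => ⟨-(Matrix.mulVec ((φ.A⁻¹ : Matrix.orthogonalGroup (Fin n) ℝ) : Matrix (Fin n) (Fin n) ℝ) φ.a), φ.A⁻¹⟩⟩

@[simp] lemma mul_a (φ ψ : Iso n) : (φ * ψ).a = φ.a + φ.mat.mulVec ψ.a := rfl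
@[simp] lemma mul_A (φ ψ : Iso n) : (φ * ψ).A = φ.A * ψ.A := rfl
@[simp] lemma one_a : (1 : Iso n).a = 0 := rfl
@[simp] lemma one_A : (1 : Iso n).A = 1 := rfl
@[simp] lemma inv_A (φ : Iso n) : (φ⁻¹).A = φ.A⁻¹ := rfl
@[simp] lemma mat_mul (φ ψ : Iso n) : (φ * ψ).mat = φ.mat * ψ.mat := rfl
@[simp] lemma mat_one : (1 : Iso n).mat = 1 := rfl

instance : Group (Iso n) where
  mul_assoc φ ψ χ := by
    ext1
    · simp [Matrix.mulVec_add, ← Matrix.mulVec_mulVec, add_assoc]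
    · exact mul_assoc _ _ _
  one_mul φ := by
    ext1
    · simp
    · exact one_mul _
  mul_one φ := by
    ext1
    · simp
    · exact mul_one _
  inv_mul_cancel φ := by
    ext1
    · show (φ⁻¹).a + (φ⁻¹).mat.mulVec φ.a = (0 : Eu n)
      show -(Matrix.mulVec _ φ.a) + Matrix.mulVec _ φ.a = (0 : Eu n)
      exact neg_add_cancel _
    · exact inv_mul_cancel _

instance : SMul (Iso n) (Eu n) := ⟨fun φ x => φ.a + φ.mat.mulVec x⟩

lemma smul_def (φ : Iso n) (x : Eu n) : φ • x = φ.a + φ.mat.mulVec x := rfl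

instance : MulAction (Iso n) (Eu n) where
  one_smul x := by
    show (0 : Eu n) + (1 : Iso n).mat.mulVec x = x
    simp
  mul_smul φ ψ x := by
    show (φ * ψ).a + (φ * ψ).mat.mulVec x = φ.a + φ.mat.mulVec (ψ.a + ψ.mat.mulVec x)
    simp [Matrix.mulVec_add, ← Matrix.mulVec_mulVec, add_assoc]

/-- The translation `x ↦ v + x`. -/
def tr (v : Eu n) : Iso n := ⟨v, 1⟩

instance : TopologicalSpace (Iso n) :=
  TopologicalSpace.induced (fun φ => (φ.a, φ.mat)) inferInstance

end Iso

/-- The orthogonal complement of a subspace of Euclidean n-space,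
with respect to the standard (dot product) inner product. -/
def perp {n : ℕ} (V : Submodule ℝ (Eu n)) : Submodule ℝ (Eu n) where
  carrier := {x | ∀ v ∈ V, dotProduct v x = 0}
  add_mem' := by
    intro x y hx hy v hv
    simp [dotProduct_add, hx v hv, hy v hv]
  zero_mem' := by
    intro v hv
    simp
  smul_mem' := by
    intro c x hx v hv
    simp [dotProduct_smul, hx v hv]

/-- The span of a subgroup of isometries: the real span of the translation
vectors of the pure translations in it. -/
def spanOf {n : ℕ} (H : Subgroup (Iso n)) : Submodule ℝ (Eu n) :=
  Submodule.span ℝ {v : Eu n | Iso.tr v ∈ H}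

/-- `N` is a normal subgroup of `Γ` (as subgroups of the isometry group). -/
def NormalIn {n : ℕ} (N Γ : Subgroup (Iso n)) : Prop :=
  N ≤ Γ ∧ ∀ γ ∈ Γ, ∀ ν ∈ N, γ * ν * γ⁻¹ ∈ N

/-- An n-space group: a discrete subgroup of the isometry group of Euclidean
n-space with compact orbit space. -/
def IsSpaceGroup {n : ℕ} (Γ : Subgroup (Iso n)) : Prop :=
  DiscreteTopology Γ ∧
    IsCompact (Set.univ : Set (Quotient (MulAction.orbitRel Γ (Eu n))))

/-- `N` is a complete normal subgroup of `Γ`. -/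
def IsCompleteNormal {n : ℕ} (N Γ : Subgroup (Iso n)) : Prop :=
  NormalIn N Γ ∧
    ∀ g : Iso n, g ∈ N ↔
      (g ∈ Γ ∧ g.a ∈ spanOf N ∧ ∀ x ∈ perp (spanOf N), (Iso.mat g).mulVec x = x)


namespace KCAux

open Matrix

variable {n : ℕ}

lemma mat_inv (φ : Iso n) : (φ⁻¹).mat = star φ.mat := rfl

lemma mat_mul_star (φ : Iso n) : φ.mat * star φ.mat = 1 := φ.A.2.2

lemma star_mul_mat (φ : Iso n) : star φ.mat * φ.mat = 1 := φ.A.2.1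

lemma inv_a (φ : Iso n) : (φ⁻¹).a = -((star φ.mat).mulVec φ.a) := rfl

lemma tr_a (v : Eu n) : (Iso.tr v).a = v := rfl

lemma tr_mat (v : Eu n) : (Iso.tr v).mat = 1 := rfl

lemma dot_mulVec' (B : Matrix (Fin n) (Fin n) ℝ) (v w : Eu n) :
    dotProduct v (B.mulVec w) = dotProduct ((star B).mulVec v) w := by
  rw [Matrix.dotProduct_mulVec, Matrix.star_eq_conjTranspose,
    Matrix.conjTranspose_eq_transpose_of_trivial, Matrix.mulVec_transpose]

lemma exists_decomp (V : Submodule ℝ (Eu n)) (x : Eu n) :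
    ∃ v ∈ V, ∃ w ∈ perp V, x = v + w := by
  let e : EuclideanSpace ℝ (Fin n) ≃ₗ[ℝ] Eu n := WithLp.linearEquiv 2 ℝ (Eu n)
  let W : Submodule ℝ (EuclideanSpace ℝ (Fin n)) := V.comap e.toLinearMap
  obtain ⟨v, hv, w, hw, hx⟩ := W.exists_add_mem_mem_orthogonal (e.symm x)
  refine ⟨e v, hv, e w, ?_, ?_⟩
  · intro u hu
    have h2 : (inner ℝ (e.symm u) w : ℝ) = 0 :=
      hw (e.symm u) (by simpa [W, Submodule.mem_comap] using hu)
    simpa [PiLp.inner_apply, RCLike.inner_apply, dotProduct, e,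
      WithLp.linearEquiv, mul_comm] using h2
  · have := congrArg e hx
    simpa [map_add, e] using this

lemma eq_zero_of_mem_inter {V : Submodule ℝ (Eu n)} {x : Eu n}
    (hx : x ∈ V) (hx' : x ∈ perp V) : x = 0 :=
  dotProduct_self_eq_zero.mp (hx' x hx)

/-- If `star B` maps `V` into `V`, then `B` maps `perp V` into `perp V`. -/
lemma mulVec_mem_perp {V : Submodule ℝ (Eu n)} {B : Matrix (Fin n) (Fin n) ℝ}
    (h : ∀ v ∈ V, (star B).mulVec v ∈ V) :
    ∀ w ∈ perp V, B.mulVec w ∈ perp V := by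
  intro w hw v hv
  rw [dot_mulVec']
  exact hw _ (h v hv)

lemma mulVec_star_cancel (φ : Iso n) (x : Eu n) :
    φ.mat.mulVec ((star φ.mat).mulVec x) = x := by
  rw [Matrix.mulVec_mulVec, mat_mul_star, Matrix.one_mulVec]

lemma mat_ext {A B : Matrix (Fin n) (Fin n) ℝ} (h : ∀ x, A.mulVec x = B.mulVec x) : A = B :=
  Matrix.toLin'.injective (LinearMap.ext fun x => by
    rw [Matrix.toLin'_apply, Matrix.toLin'_apply, h x])

lemma tr_A (v : Eu n) : (Iso.tr v).A = 1 := rfl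

lemma conj_tr (γ : Iso n) (v : Eu n) :
    γ * Iso.tr v * γ⁻¹ = Iso.tr (γ.mat.mulVec v) := by
  ext1
  · show (γ * Iso.tr v * γ⁻¹).a = γ.mat.mulVec v
    simp only [Iso.mul_a, Iso.mat_mul, tr_a, tr_mat, inv_a, mul_one,
      Matrix.mulVec_neg, Matrix.mulVec_mulVec, mat_mul_star, Matrix.one_mulVec]
    abel
  · show γ.A * (Iso.tr v).A * γ.A⁻¹ = (Iso.tr (γ.mat.mulVec v)).A
    rw [tr_A, tr_A, mul_one, mul_inv_cancel]

lemma mat_mulVec_mem_span {Γ N : Subgroup (Iso n)} (hN : IsCompleteNormal N Γ)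
    {γ : Iso n} (hγ : γ ∈ Γ) : ∀ v ∈ spanOf N, γ.mat.mulVec v ∈ spanOf N := by
  intro v hv
  have hle : Submodule.span ℝ {v : Eu n | Iso.tr v ∈ N} ≤
      (spanOf N).comap γ.mat.mulVecLin := by
    rw [Submodule.span_le]
    intro u hu
    simp only [SetLike.mem_coe, Submodule.mem_comap, Matrix.mulVecLin_apply]
    have hmem : γ * Iso.tr u * γ⁻¹ ∈ N := hN.1.2 γ hγ _ hu
    rw [conj_tr] at hmem
    have h2 := ((hN.2 _).mp hmem).2.1
    simpa [tr_a] using h2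
  exact hle hv

lemma mat_mulVec_mem_perp {Γ N : Subgroup (Iso n)} (hN : IsCompleteNormal N Γ)
    {γ : Iso n} (hγ : γ ∈ Γ) :
    ∀ w ∈ perp (spanOf N), γ.mat.mulVec w ∈ perp (spanOf N) := by
  refine mulVec_mem_perp (fun v hv => ?_)
  have h := mat_mulVec_mem_span hN (inv_mem hγ) v hv
  rwa [mat_inv] at h

end KCAux
/-- If `N` is a complete normal subgroup of the `n`-space group `Γ`, `V = Span N`, and `K`
is the kernel of the action of `Γ` on `V`, then `N ∩ K = 1`, elements of `N` and `K`
commute, and `NK = N ⊔ K` is a normal subgroup of `Γ` isomorphic to `N × K`. -/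
theorem kernel_complement {n : ℕ} (Γ N K : Subgroup (Iso n))
    (hΓ : IsSpaceGroup Γ) (hN : IsCompleteNormal N Γ)
    (hK : ∀ g : Iso n, g ∈ K ↔
      (g ∈ Γ ∧ g.a ∈ perp (spanOf N) ∧ ∀ v ∈ spanOf N, (Iso.mat g).mulVec v = v)) :
    (∀ g : Iso n, g ∈ N → g ∈ K → g = 1) ∧
    (∀ ν ∈ N, ∀ k ∈ K, ν * k = k * ν) ∧
    (N ⊔ K ≤ Γ ∧ ∀ γ ∈ Γ, ∀ g ∈ N ⊔ K, γ * g * γ⁻¹ ∈ N ⊔ K) ∧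
    Nonempty (↥(N ⊔ K) ≃* (↥N × ↥K)) := by
  classical
  set V := spanOf N with hV
  have haN : ∀ g ∈ N, g.a ∈ V := fun g hg => ((hN.2 g).mp hg).2.1
  have hfixN : ∀ g ∈ N, ∀ w ∈ perp V, g.mat.mulVec w = w := fun g hg => ((hN.2 g).mp hg).2.2
  have hNΓ : N ≤ Γ := hN.1.1
  have hKΓ : K ≤ Γ := fun g hg => ((hK g).mp hg).1
  have haK : ∀ g ∈ K, g.a ∈ perp V := fun g hg => ((hK g).mp hg).2.1
  have hfixK : ∀ g ∈ K, ∀ v ∈ V, g.mat.mulVec v = v := fun g hg => ((hK g).mp hg).2.2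
  have R1 : ∀ γ, γ ∈ Γ → ∀ v ∈ V, γ.mat.mulVec v ∈ V :=
    fun γ hγ => KCAux.mat_mulVec_mem_span hN hγ
  have R2 : ∀ γ, γ ∈ Γ → ∀ w ∈ perp V, γ.mat.mulVec w ∈ perp V :=
    fun γ hγ => KCAux.mat_mulVec_mem_perp hN hγ
  -- Part 1 : N ∩ K = 1
  have part1 : ∀ g : Iso n, g ∈ N → g ∈ K → g = 1 := by
    intro g hgN hgK
    have ha : g.a = 0 := KCAux.eq_zero_of_mem_inter (haN g hgN) (haK g hgK)
    have hmat : g.mat = 1 := by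
      refine KCAux.mat_ext (fun x => ?_)
      obtain ⟨v, hv, w, hw, rfl⟩ := KCAux.exists_decomp V x
      simp [Matrix.mulVec_add, hfixN g hgN w hw, hfixK g hgK v hv, Matrix.one_mulVec]
    ext1
    · exact ha
    · exact Subtype.ext hmat
  -- Part 2 : elements of N and K commute
  have part2 : ∀ ν ∈ N, ∀ k ∈ K, ν * k = k * ν := by
    intro ν hν k hk
    have hmat : ν.mat * k.mat = k.mat * ν.mat := by
      refine KCAux.mat_ext (fun x => ?_)
      obtain ⟨v, hv, w, hw, rfl⟩ := KCAux.exists_decomp V x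
      have h1 : k.mat.mulVec w ∈ perp V := R2 k (hKΓ hk) w hw
      have h2 : ν.mat.mulVec v ∈ V := R1 ν (hNΓ hν) v hv
      simp only [← Matrix.mulVec_mulVec, Matrix.mulVec_add, hfixK k hk v hv,
        hfixN ν hν w hw]
      rw [hfixN ν hν _ h1, hfixK k hk _ h2]
    ext1
    · show ν.a + ν.mat.mulVec k.a = k.a + k.mat.mulVec ν.a
      rw [hfixN ν hν k.a (haK k hk), hfixK k hk ν.a (haN ν hν), add_comm]
    · exact Subtype.ext hmat
  -- conjugates of K-elements stay in K
  have Kconj : ∀ γ ∈ Γ, ∀ k ∈ K, γ * k * γ⁻¹ ∈ K := by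
    intro γ hγ k hk
    rw [hK]
    have hγi : γ⁻¹ ∈ Γ := inv_mem hγ
    refine ⟨mul_mem (mul_mem hγ (hKΓ hk)) hγi, ?_, ?_⟩
    · obtain ⟨v, hv, w, hw, hva⟩ := KCAux.exists_decomp V γ.a
      have h1 : (star γ.mat).mulVec v ∈ V := by
        have := R1 γ⁻¹ hγi v hv; rwa [KCAux.mat_inv] at this
      have h2 : (star γ.mat).mulVec w ∈ perp V := by
        have := R2 γ⁻¹ hγi w hw; rwa [KCAux.mat_inv] at this
      have e2 : k.mat.mulVec ((star γ.mat).mulVec γ.a) =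
          (star γ.mat).mulVec v + k.mat.mulVec ((star γ.mat).mulVec w) := by
        rw [hva, Matrix.mulVec_add, Matrix.mulVec_add, hfixK k hk _ h1]
      have e0 : (γ * k * γ⁻¹).a =
          w + γ.mat.mulVec k.a - γ.mat.mulVec (k.mat.mulVec ((star γ.mat).mulVec w)) := by
        simp only [Iso.mul_a, Iso.mat_mul, KCAux.inv_a, Matrix.mulVec_neg,
          ← Matrix.mulVec_mulVec, e2, Matrix.mulVec_add]
        rw [KCAux.mulVec_star_cancel γ, hva]
        abel
      rw [e0]
      exact Submodule.sub_mem _ (Submodule.add_mem _ hw (R2 γ hγ _ (haK k hk)))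
        (R2 γ hγ _ (R2 k (hKΓ hk) _ h2))
    · intro x hx
      have hm : Iso.mat (γ * k * γ⁻¹) = γ.mat * k.mat * star γ.mat := by
        rw [Iso.mat_mul, Iso.mat_mul, KCAux.mat_inv]
      have hxV : (star γ.mat).mulVec x ∈ V := by
        have := R1 γ⁻¹ hγi x hx; rwa [KCAux.mat_inv] at this
      rw [hm, ← Matrix.mulVec_mulVec, ← Matrix.mulVec_mulVec, hfixK k hk _ hxV,
        KCAux.mulVec_star_cancel γ]
  -- the product set N*K is a subgroup
  let S : Subgroup (Iso n) :=
    { carrier := {g | ∃ ν ∈ N, ∃ k ∈ K, g = ν * k}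
      one_mem' := ⟨1, one_mem N, 1, one_mem K, (mul_one 1).symm⟩
      mul_mem' := by
        rintro a b ⟨ν1, hν1, k1, hk1, rfl⟩ ⟨ν2, hν2, k2, hk2, rfl⟩
        refine ⟨ν1 * ν2, mul_mem hν1 hν2, k1 * k2, mul_mem hk1 hk2, ?_⟩
        calc ν1 * k1 * (ν2 * k2) = ν1 * ((k1 * ν2) * k2) := by group
          _ = ν1 * ((ν2 * k1) * k2) := by rw [← part2 ν2 hν2 k1 hk1]
          _ = ν1 * ν2 * (k1 * k2) := by group
      inv_mem' := by
        rintro a ⟨ν, hν, k, hk, rfl⟩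
        refine ⟨ν⁻¹, inv_mem hν, k⁻¹, inv_mem hk, ?_⟩
        rw [mul_inv_rev]
        exact (part2 ν⁻¹ (inv_mem hν) k⁻¹ (inv_mem hk)).symm }
  have hsupS : N ⊔ K ≤ S :=
    sup_le (fun x hx => ⟨x, hx, 1, one_mem K, (mul_one x).symm⟩)
      (fun x hx => ⟨1, one_mem N, x, hx, (one_mul x).symm⟩)
  -- the monoid hom from the direct product
  let f : (↥N × ↥K) →* Iso n :=
    { toFun := fun p => (p.1 : Iso n) * (p.2 : Iso n)
      map_one' := by simp
      map_mul' := by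
        rintro ⟨x1, y1⟩ ⟨x2, y2⟩
        show ((x1 * x2 : ↥N) : Iso n) * ((y1 * y2 : ↥K) : Iso n) =
          ((x1 : Iso n) * y1) * ((x2 : Iso n) * y2)
        simp only [Subgroup.coe_mul]
        calc (x1 : Iso n) * x2 * ((y1 : Iso n) * y2)
            = (x1 : Iso n) * (((x2 : Iso n) * y1) * y2) := by group
          _ = (x1 : Iso n) * (((y1 : Iso n) * x2) * y2) := by
              rw [part2 _ x2.2 _ y1.2]
          _ = ((x1 : Iso n) * y1) * ((x2 : Iso n) * y2) := by group }
  have hinj : Function.Injective f := by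
    rw [injective_iff_map_eq_one]
    intro p hp
    have h1 : (p.1 : Iso n) = (p.2 : Iso n)⁻¹ := eq_inv_of_mul_eq_one_left hp
    have hKmem : (p.1 : Iso n) ∈ K := h1 ▸ inv_mem p.2.2
    have hp1 : (p.1 : Iso n) = 1 := part1 _ p.1.2 hKmem
    have hp' : (p.1 : Iso n) * (p.2 : Iso n) = 1 := hp
    have hp2 : (p.2 : Iso n) = 1 := by rwa [hp1, one_mul] at hp'
    rw [Prod.ext_iff]
    exact ⟨Subtype.ext hp1, Subtype.ext hp2⟩
  have hrange : f.range = N ⊔ K := by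
    refine le_antisymm ?_ (sup_le (fun x hx => ?_) (fun x hx => ?_))
    · rintro x ⟨p, rfl⟩
      exact mul_mem (Subgroup.mem_sup_left p.1.2) (Subgroup.mem_sup_right p.2.2)
    · exact ⟨(⟨x, hx⟩, 1), by show x * ((1 : ↥K) : Iso n) = x; simp⟩
    · exact ⟨(1, ⟨x, hx⟩), by show ((1 : ↥N) : Iso n) * x = x; simp⟩
  refine ⟨part1, part2, ⟨sup_le hNΓ hKΓ, ?_⟩, ?_⟩
  · intro γ hγ g hg
    obtain ⟨ν, hν, k, hk, rfl⟩ := hsupS hg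
    have : γ * (ν * k) * γ⁻¹ = (γ * ν * γ⁻¹) * (γ * k * γ⁻¹) := by group
    rw [this]
    exact mul_mem (Subgroup.mem_sup_left (hN.1.2 γ hγ ν hν))
      (Subgroup.mem_sup_right (Kconj γ hγ k hk))
  · exact ⟨(MulEquiv.subgroupCongr hrange.symm).trans (MonoidHom.ofInjective hinj).symm⟩
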